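/- The polynomials z̃_1^+ z^- z̃_2^+ z^- z^-, z^- z̃_1^+ z^- z̃_2^+ z^-, and z^- z^- z̃_1^+ z^- z̃_2^+ are *-identities of M_{1,2}(F): for all b_1, b_2 ∈ A_1^+ and every c ∈ A_1^-, setting D = b_1·c·b_2 − b_2·c·b_1, one has D·c·c = 0, c·D·c = 0, and c·c·D = 0. -/
import Mathlib


open Matrix

variable (F : Type*) [Field F] [CharZero F]

/-- The orthosymplectic superinvolution on `M_3(F)`:
`[[a,b,c],[d,e,f],[g,h,i]] ↦ [[a,-g,d],[c,i,-f],[-b,-h,e]]`. -/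
def osp (X : Matrix (Fin 3) (Fin 3) F) : Matrix (Fin 3) (Fin 3) F :=
  !![X 0 0, -X 2 0, X 1 0;
     X 0 2, X 2 2, -X 1 2;
     -X 0 1, -X 2 1, X 1 1]

/-- The even part of the grading `M_{1,2}(F)`: matrices `[[a,0,0],[0,e,f],[0,h,i]]`. -/
def A0 : Set (Matrix (Fin 3) (Fin 3) F) :=
  {X | X 0 1 = 0 ∧ X 0 2 = 0 ∧ X 1 0 = 0 ∧ X 2 0 = 0}

/-- The odd part of the grading `M_{1,2}(F)`: matrices `[[0,b,c],[d,0,0],[g,0,0]]`. -/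
def A1 : Set (Matrix (Fin 3) (Fin 3) F) :=
  {X | X 0 0 = 0 ∧ X 1 1 = 0 ∧ X 1 2 = 0 ∧ X 2 1 = 0 ∧ X 2 2 = 0}

/-- Even symmetric elements. -/
def A0p : Set (Matrix (Fin 3) (Fin 3) F) := {X | X ∈ A0 F ∧ osp F X = X}
/-- Even skew elements. -/
def A0m : Set (Matrix (Fin 3) (Fin 3) F) := {X | X ∈ A0 F ∧ osp F X = -X}
/-- Odd symmetric elements. -/
def A1p : Set (Matrix (Fin 3) (Fin 3) F) := {X | X ∈ A1 F ∧ osp F X = X}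
/-- Odd skew elements. -/
def A1m : Set (Matrix (Fin 3) (Fin 3) F) := {X | X ∈ A1 F ∧ osp F X = -X}

lemma A1p_repr (X : Matrix (Fin 3) (Fin 3) F) (h : X ∈ A1p F) :
    X = !![0, X 0 1, X 0 2; X 0 2, 0, 0; -X 0 1, 0, 0] := by
  obtain ⟨⟨h00, h11, h12, h21, h22⟩, hosp⟩ := h
  have e10 := congrFun (congrFun hosp 1) 0
  have e20 := congrFun (congrFun hosp 2) 0
  simp [osp] at e10 e20
  ext i j
  fin_cases i <;> fin_cases j <;>
    simp_all [Matrix.vecHead, Matrix.vecTail]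

lemma A1m_repr (X : Matrix (Fin 3) (Fin 3) F) (h : X ∈ A1m F) :
    X = !![0, X 0 1, X 0 2; -X 0 2, 0, 0; X 0 1, 0, 0] := by
  obtain ⟨⟨h00, h11, h12, h21, h22⟩, hosp⟩ := h
  have e10 := congrFun (congrFun hosp 1) 0
  have e20 := congrFun (congrFun hosp 2) 0
  simp [osp] at e10 e20
  ext i j
  fin_cases i <;> fin_cases j <;>
    simp_all [Matrix.vecHead, Matrix.vecTail] <;> linarith

lemma key_comm (p q r s u v : F) :
    !![0,p,q;q,0,0;-p,0,0] * !![0,u,v;-v,0,0;u,0,0] * !![0,r,s;s,0,0;-r,0,0]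
     - !![0,r,s;s,0,0;-r,0,0] * !![0,u,v;-v,0,0;u,0,0] * !![0,p,q;q,0,0;-p,0,0]
     = (q*r - p*s) • !![0,u,v;-v,0,0;u,0,0] := by
  simp only [Matrix.mul_fin_three, Matrix.smul_of, Matrix.smul_cons, smul_eq_mul,
    Matrix.smul_empty]
  ext i j
  fin_cases i <;> fin_cases j <;>
    simp [Matrix.vecHead, Matrix.vecTail, -mul_eq_zero] <;> ring

lemma key_cube (u v : F) :
    !![0,u,v;-v,0,0;u,0,0] * !![0,u,v;-v,0,0;u,0,0] * !![0,u,v;-v,0,0;u,0,0] = 0 := by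
  simp only [Matrix.mul_fin_three]
  ext i j
  fin_cases i <;> fin_cases j <;>
    simp [Matrix.vecHead, Matrix.vecTail, -mul_eq_zero] <;> ring

/-- `z̃₁⁺ z⁻ z̃₂⁺ z⁻ z⁻`, `z⁻ z̃₁⁺ z⁻ z̃₂⁺ z⁻` and `z⁻ z⁻ z̃₁⁺ z⁻ z̃₂⁺` are
`*`-identities of `M_{1,2}(F)`. -/
theorem star_identity_alt_with_two_skew :
    ∀ b₁ ∈ A1p F, ∀ b₂ ∈ A1p F, ∀ c ∈ A1m F,
      (b₁ * c * b₂ - b₂ * c * b₁) * c * c = 0 ∧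
      c * (b₁ * c * b₂ - b₂ * c * b₁) * c = 0 ∧
      c * c * (b₁ * c * b₂ - b₂ * c * b₁) = 0 := by
  intro b₁ hb₁ b₂ hb₂ c hc
  rw [A1p_repr F b₁ hb₁, A1p_repr F b₂ hb₂, A1m_repr F c hc]
  rw [key_comm]
  set k := b₁ 0 2 * b₂ 0 1 - b₁ 0 1 * b₂ 0 2
  set C := !![(0:F), c 0 1, c 0 2; -c 0 2, 0, 0; c 0 1, 0, 0] with hC
  have h3 : C * C * C = 0 := key_cube F (c 0 1) (c 0 2)
  refine ⟨?_, ?_, ?_⟩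
  · rw [Matrix.smul_mul, Matrix.smul_mul, h3, smul_zero]
  · rw [Matrix.mul_smul, Matrix.smul_mul, h3, smul_zero]
  · rw [Matrix.mul_smul, h3, smul_zero]
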